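/- arXiv:2502.01138 — 10 statements merged into one kernel-verified Lean document; each statement's English description precedes it below -/
import Mathlib

section
/- Let G be a group and H a subgroup of G. Then H is characteristic in G if and only if there exist a functor F : Core Grp ⥤ Grp and a natural transformation ι : F ⟶ Core.inclusion (where Core.inclusion : Core Grp ⥤ Grp is the inclusion of the core) such that H equals the range of the underlying group homomorphism of the component ι.app G : F.obj G ⟶ G. -/
/-!
If `H ≤ G` is characteristic, `X ↦ ⨆ (e : G ≃* X), e(H)` is a subgroup of `X` carried into itself by
every isomorphism, hence a subfunctor of `Core.inclusion`; at `X = G` every `e(H)` is `H`.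
Conversely, naturality of `ι` at an automorphism `φ` of `G` reads `ι_G ∘ F(φ) = φ ∘ ι_G`, so `φ`
maps the range of `ι_G` into itself.
-/

open CategoryTheory

namespace Subgroup

variable {G : Type*} [Group G]

def isoClosure (H : Subgroup G) (X : Type*) [Group X] : Subgroup X :=
  ⨆ e : G ≃* X, H.map e.toMonoidHom

theorem map_isoClosure_le (H : Subgroup G) {X Y : Type*} [Group X] [Group Y] (f : X ≃* Y) :
    (H.isoClosure X).map f.toMonoidHom ≤ H.isoClosure Y := by
  rw [isoClosure, (gc_map_comap f.toMonoidHom).l_iSup]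
  refine iSup_le fun e => ?_
  rw [map_map]
  exact le_iSup (fun e' : G ≃* Y => H.map e'.toMonoidHom) (e.trans f)

theorem Characteristic.isoClosure_self {H : Subgroup G} (hH : H.Characteristic) :
    H.isoClosure G = H := by
  simp only [isoClosure, characteristic_iff_map_eq.mp hH, iSup_const]

end Subgroup

namespace GrpCat

section CoreSubfunctor

variable (S : ∀ X : GrpCat, Subgroup X)
  (hS : ∀ {X Y : GrpCat} (f : X ≅ Y), (S X).map f.hom.hom ≤ S Y)

def coreSubfunctor : Core GrpCat ⥤ GrpCat where
  obj X := of (S X.of)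
  map f := ofHom ((Subgroup.inclusion (hS f.iso)).comp (f.iso.hom.hom.subgroupMap (S _)))
  map_id _ := by ext; rfl
  map_comp _ _ := by ext; rfl

def coreSubfunctorι : coreSubfunctor S hS ⟶ Core.inclusion GrpCat where
  app X := ofHom (S X.of).subtype

theorem range_coreSubfunctorι_app (X : Core GrpCat) :
    ((coreSubfunctorι S hS).app X).hom.range = S X.of :=
  Subgroup.range_subtype _

end CoreSubfunctor

theorem characteristic_range_app_core {F : Core GrpCat ⥤ GrpCat} (ι : F ⟶ Core.inclusion GrpCat)
    (X : Core GrpCat) : ((ι.app X).hom.range).Characteristic := by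
  refine Subgroup.characteristic_iff_map_le.mpr fun φ => ?_
  rintro _ ⟨_, ⟨y, rfl⟩, rfl⟩
  exact ⟨(F.map ⟨φ.toGrpIso⟩).hom y, congrArg (fun f => f.hom y) (ι.naturality ⟨φ.toGrpIso⟩)⟩

end GrpCat

theorem characteristic_iff_counital (G : GrpCat) (H : Subgroup G) :
    H.Characteristic ↔
      ∃ (F : Core GrpCat ⥤ GrpCat) (ι : F ⟶ Core.inclusion GrpCat),
        H = MonoidHom.range (ι.app (show Core GrpCat from ⟨G⟩)).hom := by
  constructor
  · intro hH
    have hS {X Y : GrpCat} (f : X ≅ Y) : (H.isoClosure X).map f.hom.hom ≤ H.isoClosure Y :=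
      H.map_isoClosure_le f.groupIsoToMulEquiv
    exact ⟨_, GrpCat.coreSubfunctorι _ hS,
      by rw [GrpCat.range_coreSubfunctorι_app, hH.isoClosure_self]⟩
  · rintro ⟨F, ι, rfl⟩
    exact GrpCat.characteristic_range_app_core ι _
end

section
/- Let G be a group and H a subgroup of G. Then H is fully invariant in G (i.e., H.map φ ≤ H for every group homomorphism φ : G →* G) if and only if there exist a functor F : Grp ⥤ Grp and a natural transformation ι : F ⟶ 𝟭 Grp such that H equals the range of the underlying group homomorphism of the component ι.app G : F.obj G ⟶ G. -/
/-!
The range of a component `ι.app G` of a natural transformation `ι : F ⟶ 𝟭 GrpCat` is fully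
invariant by naturality: `φ ∘ ι_G = ι_G ∘ F.map φ`. Conversely, a fully invariant `H ≤ G` is
recovered at `G` from the subfunctor of the identity `K ↦ ⨆ f : G →* K, f(H)`.
-/

open CategoryTheory

namespace Subgroup

def iSupMap {G : Type*} [Group G] (H : Subgroup G) (K : Type*) [Group K] : Subgroup K :=
  ⨆ f : G →* K, H.map f

variable {G K L : Type*} [Group G] [Group K] [Group L]

lemma map_iSupMap_le (H : Subgroup G) (g : K →* L) : (H.iSupMap K).map g ≤ H.iSupMap L := by
  rw [iSupMap, map_iSup]
  exact iSup_le fun f => (map_map H g f).symm ▸ le_iSup (fun f : G →* L => H.map f) (g.comp f)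

lemma iSupMap_self_eq {H : Subgroup G} (hH : ∀ φ : G →* G, H.map φ ≤ H) : H.iSupMap G = H :=
  le_antisymm (iSup_le hH) (le_iSup_of_le (MonoidHom.id G) (map_id H).ge)

end Subgroup

namespace GrpCat

variable (S : ∀ K : GrpCat, Subgroup K) (hS : ∀ {K L : GrpCat} (g : K ⟶ L), (S K).map g.hom ≤ S L)

def subfunctor : GrpCat ⥤ GrpCat where
  obj K := of (S K)
  map g := ofHom <| (g.hom.comp (S _).subtype).codRestrict _ fun x => hS g ⟨x, x.2, rfl⟩

def subfunctorInclusion : subfunctor S hS ⟶ 𝟭 GrpCat where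
  app K := ofHom (S K).subtype

lemma range_subfunctorInclusion_app (K : GrpCat) :
    ((subfunctorInclusion S hS).app K).hom.range = S K :=
  Subgroup.range_subtype (S K)

lemma map_range_app_le {F : GrpCat ⥤ GrpCat} (ι : F ⟶ 𝟭 GrpCat) {K L : GrpCat} (g : K ⟶ L) :
    (ι.app K).hom.range.map g.hom ≤ (ι.app L).hom.range := by
  have hnat : g.hom.comp (ι.app K).hom = (ι.app L).hom.comp (F.map g).hom :=
    congrArg Hom.hom (ι.naturality g).symm
  rw [MonoidHom.map_range, hnat, ← MonoidHom.map_range]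
  exact Subgroup.map_le_range _ _

end GrpCat

theorem fullyInvariant_iff_counit (G : GrpCat) (H : Subgroup G) :
    (∀ φ : G →* G, H.map φ ≤ H) ↔
      ∃ (F : GrpCat ⥤ GrpCat) (ι : F ⟶ 𝟭 GrpCat),
        H = MonoidHom.range (ι.app G).hom := by
  constructor
  · intro hH
    have hS {K L : GrpCat} (g : K ⟶ L) := H.map_iSupMap_le g.hom
    refine ⟨GrpCat.subfunctor _ hS, GrpCat.subfunctorInclusion _ hS, ?_⟩
    rw [GrpCat.range_subfunctorInclusion_app, Subgroup.iSupMap_self_eq hH]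
  · rintro ⟨F, ι, rfl⟩ φ
    exact GrpCat.map_range_app_le ι (GrpCat.ofHom φ)
end

section
/- Let G be a group and H a subgroup of G. Then H is characteristic in G if and only if there exist a functor F : Core Grp ⥤ Grp and a natural transformation τ : Core.inclusion ⟶ F (from the inclusion functor Core Grp ⥤ Grp to F) such that H equals the kernel of the underlying group homomorphism of the component τ.app G : G ⟶ F.obj G. -/
open CategoryTheory

/-! If `H` is characteristic, it is the kernel of `G → G ⧸ H`. This quotient extends to every
group `K` by dividing out the intersection of the images of `H` under all isomorphisms `G ≃* K`,
which isomorphisms `K ≃* L` respect, so the projections form a natural transformation on the core.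
Conversely, naturality of `τ` along an automorphism `φ` of `G` reads `τ_G ∘ φ = F(φ) ∘ τ_G`, and
`F(φ)` is an isomorphism, so `ker τ_G` is `φ`-invariant. -/

namespace Subgroup

variable {G : Type*} [Group G] (H : Subgroup G)

/-- For `K = G` this is the largest characteristic subgroup of `G` contained in `H`. -/
def charCore (K : Type*) [Group K] : Subgroup K :=
  ⨅ φ : G ≃* K, H.map φ.toMonoidHom

variable {H}

theorem mem_charCore {K : Type*} [Group K] {x : K} :
    x ∈ H.charCore K ↔ ∀ φ : G ≃* K, φ.symm x ∈ H := by
  simp only [charCore, mem_iInf, mem_map_equiv]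

instance charCore_normal [H.Normal] (K : Type*) [Group K] : (H.charCore K).Normal :=
  normal_iInf_normal fun φ => ‹H.Normal›.map φ.toMonoidHom φ.surjective

theorem charCore_le_comap {K L : Type*} [Group K] [Group L] (e : K ≃* L) :
    H.charCore K ≤ (H.charCore L).comap e.toMonoidHom := fun x hx =>
  mem_charCore.mpr fun φ => by simpa using mem_charCore.mp hx (φ.trans e.symm)

theorem charCore_self [hH : H.Characteristic] : H.charCore G = H := by
  ext x
  rw [mem_charCore]
  exact ⟨fun hx => hx (MulEquiv.refl G), fun hx φ => (characteristic_iff_comap_eq.mp hH φ.symm).ge hx⟩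

variable (H) [H.Normal]

def charCoreQuotient : Core GrpCat ⥤ GrpCat where
  obj K := GrpCat.of (K.of ⧸ H.charCore K.of)
  map f := GrpCat.ofHom <|
    QuotientGroup.map _ _ f.iso.hom.hom (charCore_le_comap f.iso.groupIsoToMulEquiv)

def charCoreQuotientMk : Core.inclusion GrpCat ⟶ H.charCoreQuotient where
  app K := GrpCat.ofHom (QuotientGroup.mk' (H.charCore K.of))

theorem ker_charCoreQuotientMk_app (K : Core GrpCat) :
    (H.charCoreQuotientMk.app K).hom.ker = H.charCore K.of :=
  QuotientGroup.ker_mk' (H.charCore K.of)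

end Subgroup

theorem characteristic_ker_app {F : Core GrpCat ⥤ GrpCat} (τ : Core.inclusion GrpCat ⟶ F)
    (K : Core GrpCat) : (τ.app K).hom.ker.Characteristic := by
  refine Subgroup.characteristic_iff_comap_eq.mpr fun φ => ?_
  let f : K ⟶ K := ⟨φ.toGrpIso⟩
  have hτ : (τ.app K).hom.comp φ.toMonoidHom = (F.map f).hom.comp (τ.app K).hom :=
    congrArg GrpCat.Hom.hom (τ.naturality f)
  rw [MonoidHom.comap_ker, hτ]
  exact MonoidHom.ker_mulEquiv_comp _ (asIso (F.map f)).groupIsoToMulEquiv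

theorem characteristic_iff_unital_kernel (G : GrpCat) (H : Subgroup G) :
    H.Characteristic ↔
      ∃ (F : Core GrpCat ⥤ GrpCat) (τ : Core.inclusion GrpCat ⟶ F),
        H = MonoidHom.ker (τ.app (show Core GrpCat from ⟨G⟩)).hom := by
  constructor
  · intro hH
    exact ⟨H.charCoreQuotient, H.charCoreQuotientMk,
      by rw [Subgroup.ker_charCoreQuotientMk_app, Subgroup.charCore_self]⟩
  · rintro ⟨F, τ, rfl⟩
    exact characteristic_ker_app τ _
end

section
/- Let G be a group and H a subgroup of G. Then H is fully invariant in G (i.e., H.map φ ≤ H for every group homomorphism φ : G →* G) if and only if there exist a functor U : Grp ⥤ Grp and a natural transformation π : 𝟭 Grp ⟶ U such that H equals the kernel of the underlying group homomorphism of the component π.app G : G ⟶ U.obj G. -/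
/-!
Naturality of `π` shows that the kernel of `π.app G` is carried into itself by every
endomorphism of `G`. Conversely, the normal closure in `K` of all homomorphic images of `H`
is preserved by every homomorphism `K → L`, so quotienting by it is a functor under `𝟭 GrpCat`;
at `K = G` this subgroup is `H` itself when `H` is fully invariant, since `H` is then normal
(conjugations are endomorphisms).
-/

open CategoryTheory

namespace Subgroup

variable {G : Type*} [Group G] (H : Subgroup G)

def normalClosureImages (K : Type*) [Group K] : Subgroup K :=
  normalClosure (⋃ φ : G →* K, (H.map φ : Set K))

variable {K L : Type*} [Group K] [Group L]

instance normalClosureImages_normal : (H.normalClosureImages K).Normal :=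
  normalClosure_normal

theorem map_le_normalClosureImages (φ : G →* K) : H.map φ ≤ H.normalClosureImages K :=
  fun _ hx ↦ subset_normalClosure (Set.mem_iUnion.2 ⟨φ, hx⟩)

theorem normalClosureImages_le {N : Subgroup K} [N.Normal] (h : ∀ φ : G →* K, H.map φ ≤ N) :
    H.normalClosureImages K ≤ N :=
  normalClosure_le_normal (Set.iUnion_subset fun φ ↦ h φ)

theorem normalClosureImages_le_comap (f : K →* L) :
    H.normalClosureImages K ≤ (H.normalClosureImages L).comap f :=
  H.normalClosureImages_le fun φ ↦ by
    rw [← map_le_iff_le_comap, map_map]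
    exact H.map_le_normalClosureImages (f.comp φ)

theorem normal_of_forall_map_le (h : ∀ φ : G →* G, H.map φ ≤ H) : H.Normal where
  conj_mem n hn g := h (MulAut.conj g).toMonoidHom ⟨n, hn, rfl⟩

theorem normalClosureImages_eq_self (h : ∀ φ : G →* G, H.map φ ≤ H) :
    H.normalClosureImages G = H :=
  have := H.normal_of_forall_map_le h
  le_antisymm (H.normalClosureImages_le h)
    (by simpa using H.map_le_normalClosureImages (MonoidHom.id G))

end Subgroup

namespace GrpCat

section QuotientFunctor

variable (N : ∀ K : GrpCat, Subgroup K) [∀ K, (N K).Normal]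
  (hN : ∀ {K L : GrpCat} (f : K ⟶ L), N K ≤ (N L).comap f.hom)

def quotientFunctor : GrpCat ⥤ GrpCat where
  obj K := of (K ⧸ N K)
  map f := ofHom (QuotientGroup.map _ _ f.hom (hN f))
  map_id _ := by ext; rfl
  map_comp _ _ := by ext; rfl

def toQuotientFunctor : 𝟭 GrpCat ⟶ quotientFunctor N hN where
  app K := ofHom (QuotientGroup.mk' (N K))

theorem ker_toQuotientFunctor_app (K : GrpCat) :
    ((toQuotientFunctor N hN).app K).hom.ker = N K :=
  QuotientGroup.ker_mk' (N K)

end QuotientFunctor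

theorem map_ker_app_le {U : GrpCat ⥤ GrpCat} (π : 𝟭 GrpCat ⟶ U) {K L : GrpCat} (f : K ⟶ L) :
    ((π.app K).hom.ker).map f.hom ≤ (π.app L).hom.ker := by
  rintro _ ⟨x, hx, rfl⟩
  have := ConcreteCategory.congr_hom (π.naturality f) x
  simp_all [MonoidHom.mem_ker]

end GrpCat

theorem fullyInvariant_iff_unit_kernel (G : GrpCat) (H : Subgroup G) :
    (∀ φ : G →* G, H.map φ ≤ H) ↔
      ∃ (U : GrpCat ⥤ GrpCat) (π : 𝟭 GrpCat ⟶ U),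
        H = MonoidHom.ker (π.app G).hom := by
  constructor
  · intro hH
    let N (K : GrpCat) : Subgroup K := H.normalClosureImages K
    have hN {K L : GrpCat} (f : K ⟶ L) : N K ≤ (N L).comap f.hom :=
      H.normalClosureImages_le_comap f.hom
    refine ⟨GrpCat.quotientFunctor N hN, GrpCat.toQuotientFunctor N hN, ?_⟩
    rw [GrpCat.ker_toQuotientFunctor_app]
    exact (H.normalClosureImages_eq_self hH).symm
  · rintro ⟨U, π, rfl⟩ φ
    exact GrpCat.map_ker_app_le π (GrpCat.ofHom φ)
end

section
/- Let G be a group and H a subgroup of G. Then H is characteristic in G if and only if there exist a multiplicative morphism property W on Grp with isomorphisms W ≤ W (i.e., W contains every isomorphism of Grp), a functor C : WideSubcategory W ⥤ WideSubcategory W, and a natural transformation η : C ⟶ 𝟭 (WideSubcategory W), such that H equals the range of the underlying group homomorphism of the component η.app G. -/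
/-!
If `H` is characteristic, transport it along every isomorphism `G ≃* A` (and take `⊥` on
groups not isomorphic to `G`): this is a well-defined, isomorphism-invariant choice of a
subgroup `K A` of every group `A`. Sending `A` to `K A` is functorial on the morphisms that
preserve all the iterates `K (K (⋯ K A))`, which include the isomorphisms, and the inclusions
`K A ⟶ A` form the required natural transformation to the identity. Conversely, naturality
of `η` with respect to an automorphism `φ` of `G` gives `φ (range η_G) ⊆ range η_G`.
-/

open CategoryTheory

lemma Subgroup.Characteristic.map_mulEquiv_eq {G A : Type*} [Group G] [Group A]
    {H : Subgroup G} (hH : H.Characteristic) (a b : G ≃* A) :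
    H.map a.toMonoidHom = H.map b.toMonoidHom := by
  have hab : H.map (a.trans b.symm).toMonoidHom = H :=
    Subgroup.characteristic_iff_map_eq.mp hH _
  conv_rhs => rw [← hab, Subgroup.map_map]
  congr 1
  ext x
  simp

noncomputable def Subgroup.transport {G : GrpCat} (H : Subgroup G) (A : GrpCat) : Subgroup A :=
  open Classical in
  if h : Nonempty (G ≃* A) then H.map h.some.toMonoidHom else ⊥

namespace SubgroupFamily

variable (K : ∀ A : GrpCat, Subgroup A)

def IsIsoInvariant : Prop :=
  ∀ ⦃A B : GrpCat⦄ (e : A ≃* B), (K A).map e.toMonoidHom = K B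

noncomputable def iterate : ℕ → ∀ A : GrpCat, Subgroup A
  | 0, _ => ⊤
  | n + 1, A => (iterate n (GrpCat.of (K A))).map (K A).subtype

variable {K}

lemma iterate_one (A : GrpCat) : iterate K 1 A = K A := by
  rw [iterate, iterate, ← MonoidHom.range_eq_map, Subgroup.range_subtype]

lemma iterate_succ_le (n : ℕ) (A : GrpCat) : iterate K (n + 1) A ≤ iterate K n A := by
  induction n generalizing A with
  | zero => exact le_top
  | succ n ih => exact Subgroup.map_mono (ih _)

lemma IsIsoInvariant.iterate (hK : IsIsoInvariant K) (n : ℕ) :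
    IsIsoInvariant (iterate K n) := by
  induction n with
  | zero =>
    intro A B e
    rw [SubgroupFamily.iterate, SubgroupFamily.iterate, ← MonoidHom.range_eq_map]
    exact MonoidHom.range_eq_top_of_surjective _ e.surjective
  | succ n ih =>
    intro A B e
    let e' : GrpCat.of (K A) ≃* GrpCat.of (K B) :=
      (e.subgroupMap (K A)).trans (MulEquiv.subgroupCongr (hK e))
    have comm : (K B).subtype.comp e'.toMonoidHom = e.toMonoidHom.comp (K A).subtype := rfl
    rw [SubgroupFamily.iterate, SubgroupFamily.iterate, Subgroup.map_map, ← comm, ← Subgroup.map_map, ih e']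

variable (K)

/-- Preserving `K` alone would not survive restriction to `K A ⟶ K B`; preserving every iterate does. -/
def preserving : MorphismProperty GrpCat :=
  fun A B f => ∀ n, (iterate K n A).map f.hom ≤ iterate K n B

instance : (preserving K).IsMultiplicative where
  id_mem A n := by
    rw [GrpCat.hom_id, Subgroup.map_id]
  comp_mem f g hf hg n := by
    rw [GrpCat.hom_comp, ← Subgroup.map_map]
    exact (Subgroup.map_mono (hf n)).trans (hg n)

variable {K}

lemma isomorphisms_le_preserving (hK : IsIsoInvariant K) :
    MorphismProperty.isomorphisms GrpCat ≤ preserving K := by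
  intro A B f (hf : IsIso f) n
  exact (hK.iterate n (asIso f).groupIsoToMulEquiv).le

noncomputable def restrict {A B : GrpCat} (f : A ⟶ B) (hf : preserving K f) :
    GrpCat.of (K A) ⟶ GrpCat.of (K B) :=
  GrpCat.ofHom <| (f.hom.comp (K A).subtype).codRestrict (K B) fun x => by
    have h := hf 1
    rw [iterate_one, iterate_one] at h
    exact h ⟨x, x.2, rfl⟩

lemma subtype_comp_restrict {A B : GrpCat} (f : A ⟶ B) (hf : preserving K f) :
    (K B).subtype.comp (restrict f hf).hom = f.hom.comp (K A).subtype :=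
  rfl

lemma restrict_preserving {A B : GrpCat} (f : A ⟶ B) (hf : preserving K f) :
    preserving K (restrict f hf) := by
  intro n
  rw [← Subgroup.map_le_map_iff_of_injective (K B).subtype_injective, Subgroup.map_map,
    subtype_comp_restrict, ← Subgroup.map_map]
  exact hf (n + 1)

variable (K)

noncomputable def functor : WideSubcategory (preserving K) ⥤ WideSubcategory (preserving K) where
  obj A := ⟨GrpCat.of (K A.obj)⟩
  map f := ⟨restrict f.hom f.property, restrict_preserving f.hom f.property⟩

noncomputable def inclusion : functor K ⟶ 𝟭 (WideSubcategory (preserving K)) where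
  app A := ⟨GrpCat.ofHom (K A.obj).subtype, fun n => iterate_succ_le n A.obj⟩

lemma range_inclusion_app (A : WideSubcategory (preserving K)) :
    ((inclusion K).app A).hom.hom.range = K A.obj :=
  Subgroup.range_subtype _

end SubgroupFamily

open SubgroupFamily

lemma Subgroup.Characteristic.transport_self {G : GrpCat} {H : Subgroup G}
    (hH : H.Characteristic) : H.transport G = H := by
  rw [transport, dif_pos ⟨MulEquiv.refl _⟩, hH.map_mulEquiv_eq _ (MulEquiv.refl _)]
  exact Subgroup.map_id H

lemma Subgroup.Characteristic.isIsoInvariant_transport {G : GrpCat} {H : Subgroup G}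
    (hH : H.Characteristic) : IsIsoInvariant H.transport := by
  intro A B e
  by_cases hA : Nonempty (G ≃* A)
  · have hB : Nonempty (G ≃* B) := ⟨hA.some.trans e⟩
    rw [transport, transport, dif_pos hA, dif_pos hB, Subgroup.map_map]
    exact hH.map_mulEquiv_eq (hA.some.trans e) hB.some
  · have hB : ¬ Nonempty (G ≃* B) := fun ⟨b⟩ => hA ⟨b.trans e.symm⟩
    rw [transport, transport, dif_neg hA, dif_neg hB, Subgroup.map_bot]

lemma range_app_characteristic {W : MorphismProperty GrpCat} [W.IsMultiplicative]
    (hW : MorphismProperty.isomorphisms GrpCat ≤ W) {C : WideSubcategory W ⥤ WideSubcategory W}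
    (η : C ⟶ 𝟭 (WideSubcategory W)) (X : WideSubcategory W) :
    (η.app X).hom.hom.range.Characteristic := by
  rw [Subgroup.characteristic_iff_map_le]
  intro φ
  let f : X ⟶ X := ⟨φ.toGrpIso.hom, hW _ (Iso.isIso_hom _)⟩
  have nat : (η.app X).hom ≫ φ.toGrpIso.hom = (C.map f).hom ≫ (η.app X).hom :=
    congrArg InducedWideCategory.Hom.hom (η.naturality f).symm
  calc (η.app X).hom.hom.range.map φ.toMonoidHom
      = ((η.app X).hom ≫ φ.toGrpIso.hom).hom.range := (MonoidHom.range_comp _ _).symm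
    _ = ((C.map f).hom ≫ (η.app X).hom).hom.range := by rw [nat]
    _ ≤ (η.app X).hom.hom.range := by
      rw [GrpCat.hom_comp, MonoidHom.range_comp]
      exact Subgroup.map_le_range _ _

theorem characteristic_iff_wideSubcategory_counit (G : GrpCat) (H : Subgroup G) :
    H.Characteristic ↔
      ∃ (W : MorphismProperty GrpCat) (hW : W.IsMultiplicative),
        MorphismProperty.isomorphisms GrpCat ≤ W ∧
        (haveI := hW
          ∃ (C : WideSubcategory W ⥤ WideSubcategory W)
            (η : C ⟶ 𝟭 (WideSubcategory W)),
              H = MonoidHom.range (η.app (WideSubcategory.mk G)).1.hom) := by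
  refine ⟨fun hH => ?_, fun ⟨W, hW, hiso, C, η, hrange⟩ => ?_⟩
  · refine ⟨preserving H.transport, inferInstance,
      isomorphisms_le_preserving hH.isIsoInvariant_transport, functor _, inclusion _, ?_⟩
    rw [range_inclusion_app, hH.transport_self]
  · exact hrange ▸ range_app_characteristic hiso η _
end

section
/- Let P : Grp → Prop be a predicate on groups, let A be the full subcategory of Grp on the groups satisfying P, with inclusion functor I : A ⥤ Grp. Let F : A ⥤ Grp be a functor and ρ : F ⟶ I a natural transformation all of whose components are monomorphisms. Then there exist a functor D : Grp ⥤ Grp, a natural transformation σ : D ⟶ 𝟭 Grp all of whose components are monomorphisms, and, for every object X of A, an isomorphism τ_X : F.obj X ≅ D.obj (I.obj X) such that ρ.app X = τ_X.hom ≫ σ.app (I.obj X). -/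
/-!
Let `D G` be the subgroup of `G` generated by the images of all composites
`F X ⟶ I X ⟶ G`, with inclusion `σ_G`. Every group homomorphism maps these generators to
generators, so `D` is a subfunctor of the identity. For `G = I X` with `I` full, each map
`I Y ⟶ I X` comes from `C`, and naturality of `ρ` puts the image of `F Y` inside the range of
`ρ_X`; hence `D (I X)` is that range, which is isomorphic to `F X` because `ρ_X` is injective.
-/

open CategoryTheory

namespace GrpCat

variable {C : Type*} [Category C] {I : C ⥤ GrpCat} (F : C ⥤ GrpCat) (ρ : F ⟶ I)

def extendSubgroup (G : GrpCat) : Subgroup G :=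
  ⨆ (X : C) (g : I.obj X ⟶ G), ((ρ.app X ≫ g).hom).range

lemma extendSubgroup_map_le {G H : GrpCat} (f : G ⟶ H) :
    (extendSubgroup F ρ G).map f.hom ≤ extendSubgroup F ρ H := by
  simp only [extendSubgroup, Subgroup.map_iSup, iSup_le_iff]
  intro X g
  rw [← MonoidHom.range_comp]
  exact le_iSup_of_le X (le_iSup_of_le (g ≫ f) le_rfl)

def extendFunctor : GrpCat ⥤ GrpCat where
  obj G := of (extendSubgroup F ρ G)
  map {G H} f := ofHom <| (f.hom.comp (extendSubgroup F ρ G).subtype).codRestrict _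
    fun x => extendSubgroup_map_le F ρ f ⟨x, x.2, rfl⟩

def extendFunctorι : extendFunctor F ρ ⟶ 𝟭 GrpCat where
  app G := ofHom (extendSubgroup F ρ G).subtype

instance (G : GrpCat) : Mono ((extendFunctorι F ρ).app G) :=
  (mono_iff_injective _).2 Subtype.val_injective

lemma extendSubgroup_obj [I.Full] (X : C) :
    extendSubgroup F ρ (I.obj X) = (ρ.app X).hom.range := by
  refine le_antisymm (iSup₂_le fun Y g => ?_) (le_iSup₂_of_le X (𝟙 _) le_rfl)
  rw [← I.map_preimage g, ← ρ.naturality, hom_comp, MonoidHom.range_comp]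
  exact Subgroup.map_le_range _ _

end GrpCat

theorem extension_theorem (P : GrpCat → Prop)
    (F : ObjectProperty.FullSubcategory P ⥤ GrpCat) (ρ : F ⟶ ObjectProperty.ι P)
    (hρ : ∀ X : ObjectProperty.FullSubcategory P, Mono (ρ.app X)) :
    ∃ (D : GrpCat ⥤ GrpCat) (σ : D ⟶ 𝟭 GrpCat),
      (∀ G : GrpCat, Mono (σ.app G)) ∧
      ∀ X : ObjectProperty.FullSubcategory P,
        ∃ τ : F.obj X ≅ D.obj ((ObjectProperty.ι P).obj X),
          ρ.app X = τ.hom ≫ σ.app ((ObjectProperty.ι P).obj X) := by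
  refine ⟨GrpCat.extendFunctor F ρ, GrpCat.extendFunctorι F ρ, inferInstance, fun X => ?_⟩
  have hinj : Function.Injective (ρ.app X) := (GrpCat.mono_iff_injective _).1 (hρ X)
  refine ⟨((MonoidHom.ofInjective hinj).trans
    (MulEquiv.subgroupCongr (GrpCat.extendSubgroup_obj F ρ X).symm)).toGrpIso, ?_⟩
  ext
  rfl
end

section
/- Let C : Grp ⥤ Grp be a functor and ι : C ⟶ 𝟭 Grp a natural transformation. Then for every group G the range of the underlying group homomorphism of ι.app G is a normal subgroup of G, and there exist a functor U : Grp ⥤ Grp and a natural transformation π : 𝟭 Grp ⟶ U such that for every group G the component π.app G is surjective and its kernel equals the range of ι.app G. -/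
/-! Naturality of `ι` makes the image of `ι.app G` stable under every endomorphism of `G`, in
particular under the inner automorphisms, so it is normal; for the same reason every `f : G ⟶ H`
descends to the quotients, which makes `G ↦ G ⧸ range (ι.app G)` a functor with `G ↠ G ⧸ …`
natural. -/

open CategoryTheory

namespace GrpCat

variable {C : GrpCat ⥤ GrpCat}

def rangeApp (ι : C ⟶ 𝟭 GrpCat) (G : GrpCat) : Subgroup G :=
  (ι.app G).hom.range

theorem rangeApp_le_comap (ι : C ⟶ 𝟭 GrpCat) {G H : GrpCat} (f : G ⟶ H) :
    rangeApp ι G ≤ (rangeApp ι H).comap f.hom := by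
  rintro _ ⟨y, rfl⟩
  exact ⟨C.map f y, ConcreteCategory.congr_hom (ι.naturality f) y⟩

instance characteristic_rangeApp (ι : C ⟶ 𝟭 GrpCat) (G : GrpCat) :
    (rangeApp ι G).Characteristic :=
  Subgroup.characteristic_iff_le_comap.mpr fun φ ↦ rangeApp_le_comap ι (ofHom φ.toMonoidHom)

noncomputable def quotientRange (ι : C ⟶ 𝟭 GrpCat) : GrpCat ⥤ GrpCat where
  obj G := of (G ⧸ rangeApp ι G)
  map f := ofHom (QuotientGroup.map _ _ f.hom (rangeApp_le_comap ι f))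

noncomputable def toQuotientRange (ι : C ⟶ 𝟭 GrpCat) : 𝟭 GrpCat ⟶ quotientRange ι where
  app G := ofHom (QuotientGroup.mk' _)

end GrpCat

theorem cokernel_of_counit (C : GrpCat ⥤ GrpCat) (ι : C ⟶ 𝟭 GrpCat) :
    (∀ G : GrpCat, (MonoidHom.range (ι.app G).hom).Normal) ∧
    ∃ (U : GrpCat ⥤ GrpCat) (π : 𝟭 GrpCat ⟶ U),
      ∀ G : GrpCat, Function.Surjective (π.app G) ∧
        MonoidHom.ker (π.app G).hom = MonoidHom.range (ι.app G).hom :=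
  ⟨fun G ↦ inferInstanceAs (GrpCat.rangeApp ι G).Normal, GrpCat.quotientRange ι,
    GrpCat.toQuotientRange ι, fun _ ↦ ⟨QuotientGroup.mk'_surjective _, QuotientGroup.ker_mk' _⟩⟩
end

section
/- Let α be a type and W a set of elements of the free group FreeGroup α. Let P : Grp → Prop be the predicate asserting that a group G satisfies all laws in W, i.e., FreeGroup.lift g w = 1 for every w ∈ W and every g : α → G. Then there exist a functor R : Grp ⥤ FullSubcategory P and an adjunction R ⊣ fullSubcategoryInclusion P such that for every group G the component of the adjunction unit at G is a surjective group homomorphism whose kernel equals the verbal subgroup V_W(G). -/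
/-!
Verbal subgroups are preserved by homomorphisms, so they are normal, and they lie in the kernel
of every homomorphism into a group satisfying the laws `W`. Hence `G ⧸ V_W(G)` satisfies `W`,
and homomorphisms from it to a group satisfying `W` are exactly homomorphisms from `G`; this hom
bijection, natural in the target, determines the reflector `G ↦ G ⧸ V_W(G)`, whose unit is the
quotient map.
-/

open CategoryTheory

universe u

def verbalSubgroup (α : Type*) (W : Set (FreeGroup α)) (G : Type*) [Group G] : Subgroup G :=
  Subgroup.closure {x : G | ∃ w ∈ W, ∃ g : α → G, FreeGroup.lift g w = x}

theorem FreeGroup.map_lift_apply {α G H : Type*} [Group G] [Group H] (f : G →* H) (g : α → G)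
    (w : FreeGroup α) : f (FreeGroup.lift g w) = FreeGroup.lift (f ∘ g) w :=
  FreeGroup.lift_unique (f.comp (FreeGroup.lift g)) fun _ => by simp

def SatisfiesLaws {α : Type*} (W : Set (FreeGroup α)) (G : Type*) [Group G] : Prop :=
  ∀ w ∈ W, ∀ g : α → G, FreeGroup.lift g w = 1

namespace verbalSubgroup

variable {α : Type*} (W : Set (FreeGroup α)) {G H : Type*} [Group G] [Group H]

theorem map_le (f : G →* H) : (verbalSubgroup α W G).map f ≤ verbalSubgroup α W H := by
  rw [verbalSubgroup, MonoidHom.map_closure]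
  refine Subgroup.closure_mono ?_
  rintro _ ⟨_, ⟨w, hw, g, rfl⟩, rfl⟩
  exact ⟨w, hw, f ∘ g, (FreeGroup.map_lift_apply f g w).symm⟩

instance normal : (verbalSubgroup α W G).Normal where
  conj_mem n hn g := map_le W (MulAut.conj g).toMonoidHom ⟨n, hn, rfl⟩

theorem le_ker {W : Set (FreeGroup α)} (hH : SatisfiesLaws W H) (f : G →* H) :
    verbalSubgroup α W G ≤ f.ker := by
  rw [verbalSubgroup, Subgroup.closure_le]
  rintro _ ⟨w, hw, g, rfl⟩
  rw [SetLike.mem_coe, MonoidHom.mem_ker, FreeGroup.map_lift_apply]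
  exact hH w hw _

theorem satisfiesLaws_quotient : SatisfiesLaws W (G ⧸ verbalSubgroup α W G) := by
  intro w hw g
  obtain ⟨g', rfl⟩ : ∃ g', QuotientGroup.mk ∘ g' = g :=
    ⟨fun a => (g a).out, funext fun a => QuotientGroup.out_eq' (g a)⟩
  rw [← QuotientGroup.coe_mk', ← FreeGroup.map_lift_apply, QuotientGroup.mk'_apply,
    QuotientGroup.eq_one_iff]
  exact Subgroup.subset_closure ⟨w, hw, g', rfl⟩

end verbalSubgroup

section Reflection

variable {α : Type u} (W : Set (FreeGroup α))

abbrev verbalQuotientObj (G : GrpCat.{u}) :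
    ObjectProperty.FullSubcategory fun G : GrpCat.{u} => SatisfiesLaws W G :=
  ⟨GrpCat.of (G ⧸ verbalSubgroup α W G), verbalSubgroup.satisfiesLaws_quotient W⟩

def verbalQuotientHomEquiv (G : GrpCat.{u})
    (H : ObjectProperty.FullSubcategory fun G : GrpCat.{u} => SatisfiesLaws W G) :
    (verbalQuotientObj W G ⟶ H) ≃ (G ⟶ (ObjectProperty.ι _).obj H) where
  toFun f := GrpCat.ofHom (f.hom.hom.comp (QuotientGroup.mk' _))
  invFun f := ObjectProperty.homMk
    (GrpCat.ofHom (QuotientGroup.lift _ f.hom (verbalSubgroup.le_ker H.property f.hom)))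
  left_inv f := by
    refine ObjectProperty.hom_ext (h := GrpCat.hom_ext (QuotientGroup.monoidHom_ext _ ?_))
    rfl
  right_inv _ := rfl

def verbalQuotient :
    GrpCat.{u} ⥤ ObjectProperty.FullSubcategory fun G : GrpCat.{u} => SatisfiesLaws W G :=
  Adjunction.leftAdjointOfEquiv (verbalQuotientHomEquiv W) fun _ _ _ _ _ => rfl

def verbalQuotientAdjunction : verbalQuotient W ⊣ ObjectProperty.ι _ :=
  Adjunction.adjunctionOfEquivLeft _ _

end Reflection

theorem variety_reflection_adjunction (α : Type u) (W : Set (FreeGroup α)) :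
    ∃ (R : GrpCat.{u} ⥤ ObjectProperty.FullSubcategory fun G : GrpCat.{u} => ∀ w ∈ W, ∀ g : α → G, FreeGroup.lift g w = 1)
      (adj : R ⊣ ObjectProperty.ι fun G : GrpCat.{u} => ∀ w ∈ W, ∀ g : α → G, FreeGroup.lift g w = 1),
      ∀ G : GrpCat.{u}, Function.Surjective (adj.unit.app G).hom ∧
        MonoidHom.ker (adj.unit.app G).hom = verbalSubgroup α W G := by
  refine ⟨verbalQuotient W, verbalQuotientAdjunction W, fun G => ?_⟩
  exact ⟨QuotientGroup.mk'_surjective (verbalSubgroup α W G),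
    QuotientGroup.ker_mk' (verbalSubgroup α W G)⟩
end

section
/- Let n be a natural number, w an element of the free group FreeGroup (Fin n), and G a group. Then the marginal set of w in G, namely {x : G | for all g : Fin n → G and all i : Fin n, FreeGroup.lift (Function.update g i (x * g i)) w = FreeGroup.lift g w}, is the underlying set of a subgroup of G, and this subgroup is characteristic in G. -/
/-- The marginal set of a word `w : FreeGroup (Fin n)` in a group `G`. -/
def marginalSet (n : ℕ) (w : FreeGroup (Fin n)) (G : Type*) [Group G] : Set G :=
  {x : G | ∀ (g : Fin n → G) (i : Fin n),
    FreeGroup.lift (Function.update g i (x * g i)) w = FreeGroup.lift g w}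

lemma marginal_one_mem (n : ℕ) (w : FreeGroup (Fin n)) (G : Type*) [Group G] :
    (1 : G) ∈ marginalSet n w G := by
  intro g i
  simp [Function.update_eq_self]

lemma marginal_mul_mem (n : ℕ) (w : FreeGroup (Fin n)) {G : Type*} [Group G]
    {x y : G} (hx : x ∈ marginalSet n w G) (hy : y ∈ marginalSet n w G) :
    x * y ∈ marginalSet n w G := by
  intro g i
  have h1 := hx (Function.update g i (y * g i)) i
  have h2 := hy g i
  have key : Function.update (Function.update g i (y * g i)) i
      (x * Function.update g i (y * g i) i) = Function.update g i (x * y * g i) := by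
    simp [Function.update_idem, mul_assoc]
  rw [key] at h1
  rw [h1, h2]

lemma marginal_inv_mem (n : ℕ) (w : FreeGroup (Fin n)) {G : Type*} [Group G]
    {x : G} (hx : x ∈ marginalSet n w G) : x⁻¹ ∈ marginalSet n w G := by
  intro g i
  have h := hx (Function.update g i (x⁻¹ * g i)) i
  have key : Function.update (Function.update g i (x⁻¹ * g i)) i
      (x * Function.update g i (x⁻¹ * g i) i) = g := by
    simp [Function.update_idem]
  rw [key] at h
  exact h.symm

lemma marginal_comp (n : ℕ) (w : FreeGroup (Fin n)) {G : Type*} [Group G]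
    (φ : G ≃* G) {x : G} (hx : x ∈ marginalSet n w G) :
    φ x ∈ marginalSet n w G := by
  intro g i
  set g0 : Fin n → G := fun j => φ.symm (g j) with hg0
  have comm : ∀ h : Fin n → G,
      FreeGroup.lift (fun j => φ (h j)) w = φ (FreeGroup.lift h w) := by
    intro h
    have : FreeGroup.lift (fun j => φ (h j)) =
        (φ.toMonoidHom).comp (FreeGroup.lift h) := by
      apply FreeGroup.ext_hom
      intro a
      simp
    rw [this]
    rfl
  have h0 := hx g0 i
  have e1 : (fun j => φ (Function.update g0 i (x * g0 i) j)) =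
      Function.update g i (φ x * g i) := by
    funext j
    by_cases hj : j = i
    · subst hj; simp [hg0]
    · simp [Function.update_of_ne hj, hg0]
  have e2 : (fun j => φ (g0 j)) = g := by
    funext j; simp [hg0]
  have := congrArg φ h0
  rw [← comm, ← comm, e1, e2] at this
  exact this

theorem marginal_is_characteristic_subgroup (n : ℕ) (w : FreeGroup (Fin n))
    (G : Type*) [Group G] :
    ∃ K : Subgroup G, (K : Set G) = marginalSet n w G ∧ K.Characteristic := by
  refine ⟨{ carrier := marginalSet n w G
            one_mem' := marginal_one_mem n w G
            mul_mem' := fun hx hy => marginal_mul_mem n w hx hy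
            inv_mem' := fun hx => marginal_inv_mem n w hx }, rfl, ?_⟩
  constructor
  intro φ
  ext x
  simp only [Subgroup.mem_comap]
  constructor
  · intro h
    have := marginal_comp n w φ.symm h
    simpa using this
  · intro h
    exact marginal_comp n w φ h
end

section
/- Let M be a monoid and N a submonoid of M. Then N is invariant under all automorphisms of M (i.e., N.map e.toMonoidHom = N for every multiplicative automorphism e : M ≃* M) if and only if there exist a functor F : Core MonCat ⥤ MonCat and a natural transformation ι : F ⟶ Core.inclusion (where Core.inclusion : Core MonCat ⥤ MonCat is the inclusion of the core) such that N equals the range of the underlying monoid homomorphism of the component ι.app M : F.obj M ⟶ M. -/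
/-!
If `N` is characteristic, its transports `N.map e` along the isomorphisms `e : M ≃* X` generate a
submonoid of every `X` that is carried into itself by every isomorphism `X ≃* Y`; this is a functor
on the core with a natural inclusion into `Core.inclusion`, and at `X = M` it is `N` again.
Conversely, naturality of `ι` along an automorphism `e` shows that `e` maps the range of `ι.app M`
into itself, and applying this also to `e.symm` gives equality.
-/

open CategoryTheory

universe u

namespace Submonoid

variable {M : Type*} [Monoid M]

theorem map_eq_of_forall_map_le {N : Submonoid M} (h : ∀ e : M ≃* M, N.map e.toMonoidHom ≤ N)
    (e : M ≃* M) : N.map e.toMonoidHom = N :=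
  le_antisymm (h e) <| (map_equiv_eq_comap_symm e N).ge.trans' (map_le_iff_le_comap.mp (h e.symm))

def iSupMapMulEquiv (N : Submonoid M) (X : Type*) [Monoid X] : Submonoid X :=
  ⨆ e : M ≃* X, N.map e.toMonoidHom

theorem iSupMapMulEquiv_self {N : Submonoid M} (h : ∀ e : M ≃* M, N.map e.toMonoidHom = N) :
    N.iSupMapMulEquiv M = N := by
  simp only [iSupMapMulEquiv, h, iSup_const]

variable (N : Submonoid M)

theorem map_iSupMapMulEquiv_le {X Y : Type*} [Monoid X] [Monoid Y] (f : X ≃* Y) :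
    (N.iSupMapMulEquiv X).map f.toMonoidHom ≤ N.iSupMapMulEquiv Y := by
  rw [iSupMapMulEquiv, map_iSup]
  refine iSup_le fun e => ?_
  rw [map_map]
  exact le_iSup (fun e' : M ≃* Y => N.map e'.toMonoidHom) (e.trans f)

def iSupMapMulEquivFunctor : Core MonCat.{u} ⥤ MonCat.{u} where
  obj X := MonCat.of (N.iSupMapMulEquiv X.of)
  map {X Y} f :=
    let e := f.iso.monCatIsoToMulEquiv
    MonCat.ofHom <| (inclusion (N.map_iSupMapMulEquiv_le e)).comp
      (e.toMonoidHom.submonoidMap (N.iSupMapMulEquiv X.of))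

def iSupMapMulEquivFunctorSubtype : N.iSupMapMulEquivFunctor ⟶ Core.inclusion MonCat.{u} where
  app X := MonCat.ofHom (N.iSupMapMulEquiv X.of).subtype

end Submonoid

theorem CategoryTheory.NatTrans.map_mrange_app_le {C : Type*} [Category C] {F G : C ⥤ MonCat}
    (ι : F ⟶ G) {X Y : C} (f : X ⟶ Y) :
    (MonoidHom.mrange (ι.app X).hom).map (G.map f).hom ≤ MonoidHom.mrange (ι.app Y).hom := by
  rw [MonoidHom.map_mrange, ← MonCat.hom_comp, ← ι.naturality, MonCat.hom_comp]
  rintro _ ⟨x, rfl⟩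
  exact ⟨_, rfl⟩

theorem submonoid_characteristic_iff_counital (M : MonCat) (N : Submonoid M) :
    (∀ e : M ≃* M, N.map e.toMonoidHom = N) ↔
      ∃ (F : Core MonCat ⥤ MonCat) (ι : F ⟶ Core.inclusion MonCat),
        N = MonoidHom.mrange (ι.app (Core.mk M : Core MonCat)).hom := by
  constructor
  · intro h
    refine ⟨N.iSupMapMulEquivFunctor, N.iSupMapMulEquivFunctorSubtype, ?_⟩
    exact (Submonoid.iSupMapMulEquiv_self h).symm.trans (Submonoid.mrange_subtype _).symm
  · rintro ⟨F, ι, rfl⟩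
    exact Submonoid.map_eq_of_forall_map_le fun e =>
      ι.map_mrange_app_le (⟨e.toMonCatIso⟩ : Core.mk M ⟶ Core.mk M)
end
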